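/- arXiv:1604.04475 — 3 statements merged into one kernel-verified Lean document; each statement's English description precedes it below -/
import Mathlib

section
/- Let A be a first 3-Leibniz algebra and g = A⊗A its associated right Leibniz algebra with bracket [x1⊗x2, y1⊗y2] = [x1,y1,y2]⊗x2 + x1⊗[x2,y1,y2]. Suppose γ: A → A^{⊗3} is a linear map satisfying γ([x1,x2,x3]) = ad^{(3)}_{(x̂1,x2,x3)} γ(x1). Define δ: g → g⊗g by δ = (σ34ᵗ ∘ σ24ᵗ ∘ (γ ⊗ I_A) + I_A ⊗ γ), where σ24ᵗ swaps tensor factors 2 and 4 and σ34ᵗ swaps factors 3 and 4 of A^{⊗4}. Then δ satisfies the right 1-cocycle condition δ([X,Y]) = (1_g ⊗ ad_Y^{(r)} + ad_Y^{(r)} ⊗ 1_g) δ(X) for all X, Y ∈ g, where ad_Y^{(r)}(Z) = [Z,Y]. -/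
open TensorProduct

/-- The adjoint map `z ↦ [z, x2, x3]` of a trilinear bracket. -/
def adR {K A : Type*} [Field K] [AddCommGroup A] [Module K A]
    (f : A →ₗ[K] A →ₗ[K] A →ₗ[K] A) (x2 x3 : A) : A →ₗ[K] A where
  toFun z := f z x2 x3
  map_add' a b := by simp
  map_smul' c a := by simp

/-- The diagonal action `g⊗1⊗1 + 1⊗g⊗1 + 1⊗1⊗g` on `A ⊗ A ⊗ A`. -/
noncomputable def diag3 {K A : Type*} [Field K] [AddCommGroup A] [Module K A]
    (g : A →ₗ[K] A) : (A ⊗[K] (A ⊗[K] A)) →ₗ[K] (A ⊗[K] (A ⊗[K] A)) :=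
  TensorProduct.map g LinearMap.id
    + TensorProduct.map LinearMap.id (TensorProduct.map g LinearMap.id)
    + TensorProduct.map LinearMap.id (TensorProduct.map LinearMap.id g)

/-- `δ = σ34ᵗ ∘ σ24ᵗ ∘ (γ ⊗ I_A) + I_A ⊗ γ : A⊗A → (A⊗A)⊗(A⊗A)`.
On pure tensors the first summand sends `x1 ⊗ x2` to `Σ (u⊗x2)⊗(v⊗w)` for
`γ(x1) = Σ u⊗v⊗w` (factors `(u,v,w,x2)` become `(u,x2,v,w)` after swapping
factors 2,4 and then 3,4), and the second sends `x1⊗x2` to `Σ (x1⊗u)⊗(v⊗w)`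
for `γ(x2) = Σ u⊗v⊗w`. -/
noncomputable def deltaMap {K A : Type*} [Field K] [AddCommGroup A] [Module K A]
    (γ : A →ₗ[K] A ⊗[K] (A ⊗[K] A)) :
    (A ⊗[K] A) →ₗ[K] (A ⊗[K] A) ⊗[K] (A ⊗[K] A) :=
  ((TensorProduct.assoc K A A (A ⊗[K] A)).symm.toLinearMap
      ∘ₗ (TensorProduct.map LinearMap.id
            (TensorProduct.comm K (A ⊗[K] A) A).toLinearMap)
      ∘ₗ (TensorProduct.assoc K A (A ⊗[K] A) A).toLinearMap
      ∘ₗ (TensorProduct.map γ LinearMap.id))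
  + ((TensorProduct.assoc K A A (A ⊗[K] A)).symm.toLinearMap
      ∘ₗ (TensorProduct.map LinearMap.id γ))

/-!
Let `g ∈ End A` act on every tensor power of `A` by the Kronecker sum
`g ⊗ 1 ⊗ ⋯ ⊗ 1 + ⋯ + 1 ⊗ ⋯ ⊗ 1 ⊗ g`. Tensor products of intertwining maps, associators and
swaps all intertwine these actions, and the hypothesis on `γ` says that `γ` intertwines
`g = [·, y1, y2]` on `A` with its action on `A^{⊗3}`. Hence `δ`, which is built from `γ`, the
identity, associators and a swap, intertwines `g ⊗ 1 + 1 ⊗ g = ad^{(r)}_{y1 ⊗ y2}` on `A ⊗ A` with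
its action on `A^{⊗4} = (A ⊗ A) ⊗ (A ⊗ A)`, which is the cocycle identity for `Y = y1 ⊗ y2`; both
sides are linear in `Y`.
-/

section KroneckerSum

variable {R M N P M' N' : Type*} [CommSemiring R]
  [AddCommMonoid M] [Module R M] [AddCommMonoid N] [Module R N] [AddCommMonoid P] [Module R P]
  [AddCommMonoid M'] [Module R M'] [AddCommMonoid N'] [Module R N']

noncomputable def kroneckerSum (a : Module.End R M) (b : Module.End R N) :
    Module.End R (M ⊗[R] N) :=
  a.rTensor N + b.lTensor M

@[simp]
theorem kroneckerSum_tmul (a : Module.End R M) (b : Module.End R N) (m : M) (n : N) :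
    kroneckerSum a b (m ⊗ₜ n) = a m ⊗ₜ n + m ⊗ₜ b n := rfl

theorem kroneckerSum_add (a a' : Module.End R M) (b b' : Module.End R N) :
    kroneckerSum (a + a') (b + b') = kroneckerSum a b + kroneckerSum a' b' := by
  rw [kroneckerSum, kroneckerSum, kroneckerSum, LinearMap.rTensor_add, LinearMap.lTensor_add,
    add_add_add_comm]

theorem map_kroneckerSum {a : Module.End R M} {b : Module.End R N} {a' : Module.End R M'}
    {b' : Module.End R N'} {φ : M →ₗ[R] M'} {ψ : N →ₗ[R] N'}
    (hφ : ∀ m, φ (a m) = a' (φ m)) (hψ : ∀ n, ψ (b n) = b' (ψ n)) (x : M ⊗[R] N) :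
    map φ ψ (kroneckerSum a b x) = kroneckerSum a' b' (map φ ψ x) := by
  suffices map φ ψ ∘ₗ kroneckerSum a b = kroneckerSum a' b' ∘ₗ map φ ψ from
    congr($this x)
  ext m n
  simp [hφ, hψ]

theorem comm_kroneckerSum (a : Module.End R M) (b : Module.End R N) (x : M ⊗[R] N) :
    TensorProduct.comm R M N (kroneckerSum a b x) =
      kroneckerSum b a (TensorProduct.comm R M N x) := by
  suffices (TensorProduct.comm R M N).toLinearMap ∘ₗ kroneckerSum a b =
      kroneckerSum b a ∘ₗ (TensorProduct.comm R M N).toLinearMap from congr($this x)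
  ext m n
  simp [add_comm]

theorem assoc_kroneckerSum (a : Module.End R M) (b : Module.End R N) (c : Module.End R P)
    (x : (M ⊗[R] N) ⊗[R] P) :
    TensorProduct.assoc R M N P (kroneckerSum (kroneckerSum a b) c x) =
      kroneckerSum a (kroneckerSum b c) (TensorProduct.assoc R M N P x) := by
  suffices (TensorProduct.assoc R M N P).toLinearMap ∘ₗ kroneckerSum (kroneckerSum a b) c =
      kroneckerSum a (kroneckerSum b c) ∘ₗ (TensorProduct.assoc R M N P).toLinearMap from
    congr($this x)
  ext m n p
  simp [add_tmul, tmul_add, add_assoc]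

theorem assoc_symm_kroneckerSum (a : Module.End R M) (b : Module.End R N) (c : Module.End R P)
    (x : M ⊗[R] (N ⊗[R] P)) :
    (TensorProduct.assoc R M N P).symm (kroneckerSum a (kroneckerSum b c) x) =
      kroneckerSum (kroneckerSum a b) c ((TensorProduct.assoc R M N P).symm x) := by
  rw [LinearEquiv.symm_apply_eq, assoc_kroneckerSum, LinearEquiv.apply_symm_apply]

end KroneckerSum

section Leibniz

variable {K A : Type*} [Field K] [AddCommGroup A] [Module K A]

theorem diag3_eq_kroneckerSum (g : A →ₗ[K] A) :
    diag3 g = kroneckerSum g (kroneckerSum g g) := by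
  rw [diag3, kroneckerSum, kroneckerSum, LinearMap.lTensor_add, add_assoc]
  rfl

theorem deltaMap_kroneckerSum {γ : A →ₗ[K] A ⊗[K] (A ⊗[K] A)} {g : A →ₗ[K] A}
    (hγ : ∀ x, γ (g x) = diag3 g (γ x)) (X : A ⊗[K] A) :
    deltaMap γ (kroneckerSum g g X) =
      kroneckerSum (kroneckerSum g g) (kroneckerSum g g) (deltaMap γ X) := by
  rw [diag3_eq_kroneckerSum] at hγ
  have hid : ∀ x, (LinearMap.id : A →ₗ[K] A) (g x) = g ((LinearMap.id : A →ₗ[K] A) x) :=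
    fun _ => rfl
  simp only [deltaMap, LinearMap.add_apply, LinearMap.coe_comp, Function.comp_apply,
    LinearEquiv.coe_coe, map_add]
  rw [map_kroneckerSum hγ hid, map_kroneckerSum hid hγ, assoc_kroneckerSum,
    map_kroneckerSum hid (comm_kroneckerSum _ _), assoc_symm_kroneckerSum, assoc_symm_kroneckerSum]

/-- `Y ↦ ad_Y^{(r)} = [·, Y]` for the bracket `[x1⊗x2, y1⊗y2] = [x1,y1,y2]⊗x2 + x1⊗[x2,y1,y2]`
on `A ⊗ A`. -/
noncomputable def rightAd (f : A →ₗ[K] A →ₗ[K] A →ₗ[K] A) :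
    A ⊗[K] A →ₗ[K] Module.End K (A ⊗[K] A) :=
  lift (((LinearMap.lflip (R₀ := K)).toLinearMap ∘ₗ f.flip).compr₂
    (LinearMap.rTensorHom A + LinearMap.lTensorHom A))

theorem rightAd_tmul (f : A →ₗ[K] A →ₗ[K] A →ₗ[K] A) (y1 y2 : A) :
    rightAd f (y1 ⊗ₜ y2) = kroneckerSum (adR f y1 y2) (adR f y1 y2) :=
  rfl

theorem deltaMap_rightAd {f : A →ₗ[K] A →ₗ[K] A →ₗ[K] A} {γ : A →ₗ[K] A ⊗[K] (A ⊗[K] A)}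
    (hcoc : ∀ x1 x2 x3 : A, γ (f x1 x2 x3) = diag3 (adR f x2 x3) (γ x1)) (X Y : A ⊗[K] A) :
    deltaMap γ (rightAd f Y X) = kroneckerSum (rightAd f Y) (rightAd f Y) (deltaMap γ X) := by
  induction Y using TensorProduct.induction_on with
  | zero => simp [kroneckerSum]
  | add Y Y' hY hY' => simp only [map_add, LinearMap.add_apply, kroneckerSum_add, hY, hY']
  | tmul y1 y2 => exact deltaMap_kroneckerSum (hcoc · y1 y2) X

end Leibniz

theorem delta_is_right_one_cocycle_general
    {K A : Type*} [Field K] [AddCommGroup A] [Module K A]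
    (f : A →ₗ[K] A →ₗ[K] A →ₗ[K] A)
    (γ : A →ₗ[K] A ⊗[K] (A ⊗[K] A))
    (hcoc : ∀ x1 x2 x3 : A, γ (f x1 x2 x3) = diag3 (adR f x2 x3) (γ x1)) :
    ∃ B : (A ⊗[K] A) →ₗ[K] (A ⊗[K] A) →ₗ[K] (A ⊗[K] A),
      (∀ x1 x2 y1 y2 : A,
        B (x1 ⊗ₜ[K] x2) (y1 ⊗ₜ[K] y2) =
          (f x1 y1 y2) ⊗ₜ[K] x2 + x1 ⊗ₜ[K] (f x2 y1 y2)) ∧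
      (∀ X Y : A ⊗[K] A,
        deltaMap γ (B X Y) =
          TensorProduct.map LinearMap.id (B.flip Y) (deltaMap γ X)
            + TensorProduct.map (B.flip Y) LinearMap.id (deltaMap γ X)) := by
  refine ⟨(rightAd f).flip, fun x1 x2 y1 y2 => rfl, fun X Y => ?_⟩
  rw [LinearMap.flip_flip, LinearMap.flip_apply, deltaMap_rightAd hcoc, add_comm]
  rfl

/-- If `A` is a first 3-Leibniz algebra and `γ` satisfies the 1-cocycle
condition `γ([x1,x2,x3]) = ad^{(3)}_{(x̂1,x2,x3)} γ(x1)`, then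
`δ = σ34ᵗ∘σ24ᵗ∘(γ⊗I) + I⊗γ` satisfies the right 1-cocycle condition
`δ([X,Y]) = (1⊗ad_Y^{(r)} + ad_Y^{(r)}⊗1) δ(X)` on the associated right Leibniz
algebra `g = A⊗A`. -/
theorem delta_is_right_one_cocycle
    {K A : Type*} [Field K] [AddCommGroup A] [Module K A]
    (f : A →ₗ[K] A →ₗ[K] A →ₗ[K] A)
    (h1 : ∀ y1 y2 y3 x2 x3 : A,
      f (f y1 y2 y3) x2 x3 =
        f (f y1 x2 x3) y2 y3 + f y1 (f y2 x2 x3) y3 + f y1 y2 (f y3 x2 x3))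
    (γ : A →ₗ[K] A ⊗[K] (A ⊗[K] A))
    (hcoc : ∀ x1 x2 x3 : A, γ (f x1 x2 x3) = diag3 (adR f x2 x3) (γ x1)) :
    ∃ B : (A ⊗[K] A) →ₗ[K] (A ⊗[K] A) →ₗ[K] (A ⊗[K] A),
      (∀ x1 x2 y1 y2 : A,
        B (x1 ⊗ₜ[K] x2) (y1 ⊗ₜ[K] y2) =
          (f x1 y1 y2) ⊗ₜ[K] x2 + x1 ⊗ₜ[K] (f x2 y1 y2)) ∧
      (∀ X Y : A ⊗[K] A,
        deltaMap γ (B X Y) =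
          TensorProduct.map LinearMap.id (B.flip Y) (deltaMap γ X)
            + TensorProduct.map (B.flip Y) LinearMap.id (deltaMap γ X)) :=
  delta_is_right_one_cocycle_general f γ hcoc
end

section
/- Let A be the 3-dimensional real first 3-Leibniz algebra with bracket [e2,e3,e3] = e1, [e3,e3,e3] = e2 (other basis brackets zero), and for nonzero reals a,b define γ: A → A^{⊗3} via the dual structure constants: γ(e_i) = f̃^{jkm}_i e_j⊗e_k⊗e_m, where the only nonzero dual structure constants are f̃^{111}_2 = b, f̃^{111}_3 = a, f̃^{112}_3 = b. Then γ satisfies the 1-cocycle condition γ([x1,x2,x3]) = ad^{(3)}_{(x̂1,x2,x3)} γ(x1) for all x1,x2,x3 ∈ A. -/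
open TensorProduct

/-- For the 3-dimensional first 3-Leibniz algebra with
`[e2,e3,e3] = e1`, `[e3,e3,e3] = e2`, the cocommutator `γ` determined by the dual
structure constants `f̃^{111}_2 = b`, `f̃^{111}_3 = a`, `f̃^{112}_3 = b` (nonzero
reals `a`, `b`) satisfies the 1-cocycle condition
`γ([x1,x2,x3]) = ad^{(3)}_{(x̂1,x2,x3)} γ(x1)`. -/
theorem example_cocommutator_one_cocycle
    (a b : ℝ) (ha : a ≠ 0) (hb : b ≠ 0)
    (f : (Fin 3 → ℝ) →ₗ[ℝ] (Fin 3 → ℝ) →ₗ[ℝ] (Fin 3 → ℝ) →ₗ[ℝ] (Fin 3 → ℝ))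
    (e : Fin 3 → (Fin 3 → ℝ)) (he : ∀ i : Fin 3, e i = Pi.single i 1)
    (hf : ∀ i j k : Fin 3,
      f (e i) (e j) (e k) =
        if i = 1 ∧ j = 2 ∧ k = 2 then e 0
        else if i = 2 ∧ j = 2 ∧ k = 2 then e 1
        else 0)
    (γ : (Fin 3 → ℝ) →ₗ[ℝ] (Fin 3 → ℝ) ⊗[ℝ] ((Fin 3 → ℝ) ⊗[ℝ] (Fin 3 → ℝ)))
    (hγ0 : γ (e 0) = 0)
    (hγ1 : γ (e 1) = b • (e 0 ⊗ₜ[ℝ] (e 0 ⊗ₜ[ℝ] e 0)))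
    (hγ2 : γ (e 2) =
      a • (e 0 ⊗ₜ[ℝ] (e 0 ⊗ₜ[ℝ] e 0)) + b • (e 0 ⊗ₜ[ℝ] (e 0 ⊗ₜ[ℝ] e 1))) :
    ∀ x1 x2 x3 : Fin 3 → ℝ, γ (f x1 x2 x3) = diag3 (adR f x2 x3) (γ x1) := by

  intro x1 x2 x3
  have hx : ∀ x : Fin 3 → ℝ, x = x 0 • e 0 + x 1 • e 1 + x 2 • e 2 := by
    intro x
    ext j
    fin_cases j <;> simp [he]
  obtain ⟨c1, hc1⟩ : ∃ c : Fin 3 → ℝ, x1 = c 0 • e 0 + c 1 • e 1 + c 2 • e 2 :=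
    ⟨x1, hx x1⟩
  obtain ⟨c2, hc2⟩ : ∃ c : Fin 3 → ℝ, x2 = c 0 • e 0 + c 1 • e 1 + c 2 • e 2 :=
    ⟨x2, hx x2⟩
  obtain ⟨c3, hc3⟩ : ∃ c : Fin 3 → ℝ, x3 = c 0 • e 0 + c 1 • e 1 + c 2 • e 2 :=
    ⟨x3, hx x3⟩
  have hfe : ∀ i j k : Fin 3, f (e i) (e j) (e k) =
      if i = 1 ∧ j = 2 ∧ k = 2 then e 0
      else if i = 2 ∧ j = 2 ∧ k = 2 then e 1 else 0 := hf
  rw [hc1, hc2, hc3]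
  simp only [map_add, map_smul, LinearMap.add_apply, LinearMap.smul_apply, hfe,
    hγ0, hγ1, hγ2, diag3, adR, LinearMap.coe_mk, AddHom.coe_mk,
    TensorProduct.map_tmul, LinearMap.id_coe, id_eq, smul_add,
    TensorProduct.tmul_smul, TensorProduct.smul_tmul',
    Fin.isValue, reduceIte, Fin.reduceEq, and_false, false_and, and_true, true_and,
    if_true, if_false, map_zero, smul_zero, zero_add, add_zero,
    TensorProduct.tmul_zero, TensorProduct.zero_tmul]
  simp only [← TensorProduct.smul_tmul', TensorProduct.smul_tmul, TensorProduct.tmul_smul,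
    smul_smul]
  module
end

section
/- Let A be the 4-dimensional real 3-Lie algebra with [e2,e3,e4] = e1, [e1,e3,e4] = e2 (alternating, other triples zero) and let b be a nonzero real. Define γ: A → A^{⊗3} by γ(x) = Σ f̃^{jkm}_i e_j⊗e_k⊗e_m for x = e_i, where f̃ are the (alternating) structure constants of the dual bracket [ẽ1,ẽ2,ẽ4]_* = b·ẽ1, [ẽ3,ẽ2,ẽ4]_* = b·ẽ3. Then γ satisfies the 3-Lie bialgebra 1-cocycle condition γ[y1,y2,y3] = ad^{(3)}_{(y2,y3,ŷ1)}γ(y1) + ad^{(3)}_{(y3,y1,ŷ2)}γ(y2) + ad^{(3)}_{(y1,y2,ŷ3)}γ(y3). -/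
/-!
Both sides of the cocycle identity are trilinear and alternating in `(y1, y2, y3)`: the
left side because the bracket is, the right side because `ad_{(y,z)}` is alternating in `y, z`
and the three terms are permuted cyclically. Hence it suffices to check the identity on the
four basis triples `e i, e j, e k` with `i < j < k`. There `ad⁽³⁾` acts on the alternating
tensors `altT` as a derivation, and every check collapses because the resulting `altT` terms
have a zero or a repeated entry.
-/

open TensorProduct

/-- The alternating sum of the six permuted triple tensors of `u, v, w`. -/
noncomputable def altT {K A : Type*} [Field K] [AddCommGroup A] [Module K A]
    (u v w : A) : A ⊗[K] (A ⊗[K] A) :=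
  u ⊗ₜ[K] (v ⊗ₜ[K] w) - u ⊗ₜ[K] (w ⊗ₜ[K] v) - v ⊗ₜ[K] (u ⊗ₜ[K] w)
    + v ⊗ₜ[K] (w ⊗ₜ[K] u) + w ⊗ₜ[K] (u ⊗ₜ[K] v) - w ⊗ₜ[K] (v ⊗ₜ[K] u)

section Trilinear

variable {R M N : Type*} [CommRing R] [AddCommGroup M] [Module R M] [AddCommGroup N]
  [Module R N] {g : M →ₗ[R] M →ₗ[R] M →ₗ[R] N}

def LinearMap.rotate₃ (g : M →ₗ[R] M →ₗ[R] M →ₗ[R] N) : M →ₗ[R] M →ₗ[R] M →ₗ[R] N :=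
  (LinearMap.lflip.toLinearMap ∘ₗ g).flip

@[simp] theorem LinearMap.rotate₃_apply (g : M →ₗ[R] M →ₗ[R] M →ₗ[R] N) (x y z : M) :
    g.rotate₃ x y z = g y z x := rfl

theorem trilinear_swap_left (h : ∀ x z, g x x z = 0) (x y z : M) : g y x z = -g x y z := by
  have hxy := h (x + y) z
  simp only [map_add, LinearMap.add_apply, h, zero_add, add_zero] at hxy
  exact eq_neg_of_add_eq_zero_left hxy

theorem trilinear_swap_right (h : ∀ x y, g x y y = 0) (x y z : M) : g x z y = -g x y z := by
  have hyz := h x (y + z)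
  simp only [map_add, LinearMap.add_apply, h, zero_add, add_zero] at hyz
  exact eq_neg_of_add_eq_zero_left hyz

theorem trilinear_cycle (h₁ : ∀ x z, g x x z = 0) (h₂ : ∀ x y, g x y y = 0) (x y z : M) :
    g y z x = g x y z := by
  rw [trilinear_swap_right h₂ y x z, trilinear_swap_left h₁, neg_neg]

theorem trilinear_cycle_of_eq (h₁ : ∀ x z, g x x z = 0) (h₂ : ∀ x y, g x y y = 0) {x y z : M}
    {w : N} (h : g x y z = w) : g y z x = w ∧ g z x y = w :=
  ⟨(trilinear_cycle h₁ h₂ x y z).trans h, (trilinear_cycle h₁ h₂ y z x).trans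
    ((trilinear_cycle h₁ h₂ x y z).trans h)⟩

theorem trilinear_self_outer (h₁ : ∀ x z, g x x z = 0) (h₂ : ∀ x y, g x y y = 0) (x y : M) :
    g x y x = 0 := by
  rw [← trilinear_cycle h₁ h₂, h₂]

theorem trilinear_eq_zero_of_basis_lt {ι : Type*} [LinearOrder ι] (b : Module.Basis ι R M)
    (h₁ : ∀ x z, g x x z = 0) (h₂ : ∀ x y, g x y y = 0)
    (hlt : ∀ i j k, i < j → j < k → g (b i) (b j) (b k) = 0) : g = 0 := by
  have hlt' : ∀ i j k, i < j → g (b i) (b j) (b k) = 0 := by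
    intro i j k hij
    rcases lt_trichotomy j k with hjk | rfl | hkj
    · exact hlt i j k hij hjk
    · exact h₂ _ _
    rcases lt_trichotomy i k with hik | rfl | hki
    · rw [← neg_eq_zero, ← trilinear_swap_right h₂, hlt i k j hik hkj]
    · exact trilinear_self_outer h₁ h₂ _ _
    · rw [trilinear_cycle h₁ h₂ (b k), hlt k i j hki hij]
  refine b.ext fun i => b.ext fun j => b.ext fun k => ?_
  show g (b i) (b j) (b k) = 0
  rcases lt_trichotomy i j with hij | rfl | hji
  · exact hlt' i j k hij
  · exact h₁ _ _
  · rw [← neg_eq_zero, ← trilinear_swap_left h₁, hlt' j i k hji]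

theorem trilinear_ext_of_basis_lt {ι : Type*} [LinearOrder ι] (b : Module.Basis ι R M)
    {g₁ g₂ : M →ₗ[R] M →ₗ[R] M →ₗ[R] N}
    (hg₁ : (∀ x z, g₁ x x z = 0) ∧ ∀ x y, g₁ x y y = 0)
    (hg₂ : (∀ x z, g₂ x x z = 0) ∧ ∀ x y, g₂ x y y = 0)
    (hlt : ∀ i j k, i < j → j < k → g₁ (b i) (b j) (b k) = g₂ (b i) (b j) (b k)) : g₁ = g₂ := by
  refine sub_eq_zero.mp (trilinear_eq_zero_of_basis_lt b ?_ ?_ ?_)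
  · intro x z; simp [hg₁.1, hg₂.1]
  · intro x y; simp [hg₁.2, hg₂.2]
  · intro i j k hij hjk; simp [hlt i j k hij hjk]

end Trilinear

section Cocycle

variable {K A : Type*} [Field K] [AddCommGroup A] [Module K A]

noncomputable def diag3ₗ :
    (A →ₗ[K] A) →ₗ[K] (A ⊗[K] (A ⊗[K] A)) →ₗ[K] (A ⊗[K] (A ⊗[K] A)) where
  toFun := diag3
  map_add' g h := by
    simp only [diag3, TensorProduct.map_add_left, TensorProduct.map_add_right]; abel
  map_smul' c g := by
    simp only [diag3, TensorProduct.map_smul_left, TensorProduct.map_smul_right,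
      RingHom.id_apply, smul_add]

@[simp] theorem diag3_zero : diag3 (0 : A →ₗ[K] A) = 0 := map_zero diag3ₗ

@[simp] theorem diag3_neg (g : A →ₗ[K] A) : diag3 (-g) = -diag3 g := map_neg diag3ₗ g

theorem diag3_altT (g : A →ₗ[K] A) (u v w : A) :
    diag3 g (altT u v w) = altT (g u) v w + altT u (g v) w + altT u v (g w) := by
  simp only [diag3, altT, LinearMap.add_apply, map_sub, map_add, TensorProduct.map_tmul,
    LinearMap.id_coe, id_eq]
  abel

@[simp] theorem altT_zero_left (v w : A) : altT (K := K) 0 v w = 0 := by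
  simp only [altT, zero_tmul, tmul_zero]; abel

@[simp] theorem altT_zero_mid (u w : A) : altT (K := K) u 0 w = 0 := by
  simp only [altT, zero_tmul, tmul_zero]; abel

@[simp] theorem altT_zero_right (u v : A) : altT (K := K) u v 0 = 0 := by
  simp only [altT, zero_tmul, tmul_zero]; abel

@[simp] theorem altT_self_left (u w : A) : altT (K := K) u u w = 0 := by
  simp only [altT]; abel

@[simp] theorem altT_self_outer (u v : A) : altT (K := K) u v u = 0 := by
  simp only [altT]; abel

variable (f : A →ₗ[K] A →ₗ[K] A →ₗ[K] A) (γ : A →ₗ[K] A ⊗[K] (A ⊗[K] A))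

noncomputable def cocycleLHS : A →ₗ[K] A →ₗ[K] A →ₗ[K] A ⊗[K] (A ⊗[K] A) :=
  f.compr₂ (LinearMap.llcomp K A A (A ⊗[K] (A ⊗[K] A)) γ)

noncomputable def cocycleRHS : A →ₗ[K] A →ₗ[K] A →ₗ[K] A ⊗[K] (A ⊗[K] A) :=
  let adTerm := (f.compr₂ diag3ₗ).compr₂ (LinearMap.lcomp K (A ⊗[K] (A ⊗[K] A)) γ)
  adTerm.rotate₃ + adTerm.rotate₃.rotate₃ + adTerm

@[simp] theorem cocycleLHS_apply (x y z : A) : cocycleLHS f γ x y z = γ (f x y z) := rfl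

@[simp] theorem cocycleRHS_apply (x y z : A) :
    cocycleRHS f γ x y z =
      diag3 (f y z) (γ x) + diag3 (f z x) (γ y) + diag3 (f x y) (γ z) :=
  rfl

variable {f}

theorem cocycleLHS_self_left (h₁ : ∀ x z, f x x z = 0) (x z : A) :
    cocycleLHS f γ x x z = 0 := by
  rw [cocycleLHS_apply, h₁, map_zero]

theorem cocycleLHS_self_right (h₂ : ∀ x y, f x y y = 0) (x y : A) :
    cocycleLHS f γ x y y = 0 := by
  rw [cocycleLHS_apply, h₂, map_zero]

theorem cocycleRHS_self_left (h₁ : ∀ x z, f x x z = 0) (x z : A) :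
    cocycleRHS f γ x x z = 0 := by
  have hff : f x x = 0 := LinearMap.ext (h₁ x)
  have hswap : f z x = -f x z := LinearMap.ext (trilinear_swap_left h₁ x z)
  simp [hff, hswap]

theorem cocycleRHS_self_right (h₁ : ∀ x z, f x x z = 0) (x y : A) :
    cocycleRHS f γ x y y = 0 := by
  have hff : f y y = 0 := LinearMap.ext (h₁ y)
  have hswap : f y x = -f x y := LinearMap.ext (trilinear_swap_left h₁ x y)
  simp [hff, hswap]

theorem cocycle_of_basis_lt {ι : Type*} [LinearOrder ι] (b : Module.Basis ι K A)
    (h₁ : ∀ x z, f x x z = 0) (h₂ : ∀ x y, f x y y = 0)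
    (hlt : ∀ i j k, i < j → j < k →
      γ (f (b i) (b j) (b k)) = diag3 (f (b j) (b k)) (γ (b i)) +
        diag3 (f (b k) (b i)) (γ (b j)) + diag3 (f (b i) (b j)) (γ (b k)))
    (x y z : A) :
    γ (f x y z) = diag3 (f y z) (γ x) + diag3 (f z x) (γ y) + diag3 (f x y) (γ z) := by
  have h := trilinear_ext_of_basis_lt b (g₁ := cocycleLHS f γ) (g₂ := cocycleRHS f γ)
    ⟨cocycleLHS_self_left γ h₁, cocycleLHS_self_right γ h₂⟩
    ⟨cocycleRHS_self_left γ h₁, cocycleRHS_self_right γ h₁⟩ hlt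
  simpa using congr($h x y z)

end Cocycle

theorem example_3Lie_bialgebra_cocycle_general
    (b : ℝ)
    (f : (Fin 4 → ℝ) →ₗ[ℝ] (Fin 4 → ℝ) →ₗ[ℝ] (Fin 4 → ℝ) →ₗ[ℝ] (Fin 4 → ℝ))
    (e : Fin 4 → (Fin 4 → ℝ)) (he : ∀ i : Fin 4, e i = Pi.single i 1)
    (halt1 : ∀ x y : Fin 4 → ℝ, f x x y = 0)
    (halt2 : ∀ x y : Fin 4 → ℝ, f x y y = 0)
    (h123 : f (e 0) (e 1) (e 2) = 0)
    (h124 : f (e 0) (e 1) (e 3) = 0)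
    (h234 : f (e 1) (e 2) (e 3) = e 0)
    (h134 : f (e 0) (e 2) (e 3) = e 1)
    (γ : (Fin 4 → ℝ) →ₗ[ℝ] (Fin 4 → ℝ) ⊗[ℝ] ((Fin 4 → ℝ) ⊗[ℝ] (Fin 4 → ℝ)))
    (hγ0 : γ (e 0) = b • altT (e 0) (e 1) (e 3))
    (hγ1 : γ (e 1) = 0)
    (hγ2 : γ (e 2) = b • altT (e 2) (e 1) (e 3))
    (hγ3 : γ (e 3) = 0) :
    ∀ y1 y2 y3 : Fin 4 → ℝ,
      γ (f y1 y2 y3) =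
        diag3 (f y2 y3) (γ y1) + diag3 (f y3 y1) (γ y2) + diag3 (f y1 y2) (γ y3) := by
  have hbasis : ⇑(Pi.basisFun ℝ (Fin 4)) = e := funext fun i => by simp [he]
  have rot : ∀ {x y z w : Fin 4 → ℝ}, f x y z = w → f y z x = w ∧ f z x y = w :=
    trilinear_cycle_of_eq halt1 halt2
  refine cocycle_of_basis_lt γ (Pi.basisFun ℝ (Fin 4)) halt1 halt2 ?_
  rw [hbasis]
  intro i j k hij hjk
  obtain ⟨rfl, rfl, rfl⟩ | ⟨rfl, rfl, rfl⟩ | ⟨rfl, rfl, rfl⟩ | ⟨rfl, rfl, rfl⟩ :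
      i = 0 ∧ j = 1 ∧ k = 2 ∨ i = 0 ∧ j = 1 ∧ k = 3 ∨ i = 0 ∧ j = 2 ∧ k = 3 ∨
        i = 1 ∧ j = 2 ∧ k = 3 := by
    revert i j k; decide
  all_goals simp [hγ0, hγ1, hγ2, hγ3, diag3_altT, h123, h124, h234, h134, (rot h123).1,
    (rot h124).1, (rot h124).2, (rot h234).1, (rot h234).2, (rot h134).1, (rot h134).2,
    halt2, trilinear_self_outer halt1 halt2]

/-- For the 4-dimensional 3-Lie algebra with `[e2,e3,e4] = e1`,
`[e1,e3,e4] = e2` and the cocommutator `γ` determined by the alternating dual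
structure constants of `[ẽ1,ẽ2,ẽ4]_* = b·ẽ1`, `[ẽ3,ẽ2,ẽ4]_* = b·ẽ3`, the map `γ`
satisfies the 3-Lie bialgebra 1-cocycle condition. -/
theorem example_3Lie_bialgebra_cocycle
    (b : ℝ) (hb : b ≠ 0)
    (f : (Fin 4 → ℝ) →ₗ[ℝ] (Fin 4 → ℝ) →ₗ[ℝ] (Fin 4 → ℝ) →ₗ[ℝ] (Fin 4 → ℝ))
    (e : Fin 4 → (Fin 4 → ℝ)) (he : ∀ i : Fin 4, e i = Pi.single i 1)
    (halt1 : ∀ x y : Fin 4 → ℝ, f x x y = 0)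
    (halt2 : ∀ x y : Fin 4 → ℝ, f x y y = 0)
    (hfil : ∀ x1 x2 y1 y2 y3 : Fin 4 → ℝ,
      f x1 x2 (f y1 y2 y3) =
        f (f x1 x2 y1) y2 y3 + f y1 (f x1 x2 y2) y3 + f y1 y2 (f x1 x2 y3))
    (h123 : f (e 0) (e 1) (e 2) = 0)
    (h124 : f (e 0) (e 1) (e 3) = 0)
    (h234 : f (e 1) (e 2) (e 3) = e 0)
    (h134 : f (e 0) (e 2) (e 3) = e 1)
    (γ : (Fin 4 → ℝ) →ₗ[ℝ] (Fin 4 → ℝ) ⊗[ℝ] ((Fin 4 → ℝ) ⊗[ℝ] (Fin 4 → ℝ)))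
    (hγ0 : γ (e 0) = b • altT (e 0) (e 1) (e 3))
    (hγ1 : γ (e 1) = 0)
    (hγ2 : γ (e 2) = b • altT (e 2) (e 1) (e 3))
    (hγ3 : γ (e 3) = 0) :
    ∀ y1 y2 y3 : Fin 4 → ℝ,
      γ (f y1 y2 y3) =
        diag3 (f y2 y3) (γ y1) + diag3 (f y3 y1) (γ y2) + diag3 (f y1 y2) (γ y3) :=
  example_3Lie_bialgebra_cocycle_general b f e he halt1 halt2 h123 h124 h234 h134 γ hγ0 hγ1 hγ2 hγ3
end
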